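/- arXiv:1308.0997 — 2 statements merged into one kernel-verified Lean document; each statement's English description precedes it below -/
import Mathlib

section
/- Let R be a commutative ring that is a ℚ-algebra and let a, b ∈ R. The power series f₃ is annihilated by the hypergeometric operator: writing θ(f) = x·f′ for the formal Euler operator on R[[x]], one has θ(θ(f₃) − f₃) = x²·( a·g − (x/2)·g′ ), where g = b·f₃ − (x/2)·f₃′; in other words, θ(θ − 1)f₃ = x²·(a − (x/2)·d/dx)(b − (x/2)·d/dx)f₃. -/
open PowerSeries

noncomputable def f₁ {R : Type*} [CommRing R] [Algebra ℚ R] (a b : R) : R⟦X⟧ :=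
  PowerSeries.mk fun n =>
    if n % 2 = 0 then
      ((Nat.factorial n : ℚ))⁻¹ • ∏ r ∈ Finset.range (n / 2), ((a + (r : R)) * (b + (r : R)))
    else 0

noncomputable def f₂ {R : Type*} [CommRing R] [Algebra ℚ R] (a b : R) : R⟦X⟧ :=
  PowerSeries.mk fun n =>
    if n % 2 = 1 then
      ((Nat.factorial n : ℚ))⁻¹ • ∏ r ∈ Finset.range (n / 2),
        ((a + (r : R) + algebraMap ℚ R (1/2)) * (b + (r : R) + algebraMap ℚ R (1/2)))
    else 0

noncomputable def f₃ {R : Type*} [CommRing R] [Algebra ℚ R] (a b : R) : R⟦X⟧ :=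
  PowerSeries.mk fun n =>
    if n % 2 = 0 then
      ((Nat.factorial n : ℚ))⁻¹ • ∏ r ∈ Finset.range (n / 2), ((a - (r : R)) * (b - (r : R)))
    else 0

noncomputable def f₄ {R : Type*} [CommRing R] [Algebra ℚ R] (a b : R) : R⟦X⟧ :=
  PowerSeries.mk fun n =>
    if n % 2 = 1 then
      ((Nat.factorial n : ℚ))⁻¹ • ∏ r ∈ Finset.range (n / 2),
        ((a - (r : R) - algebraMap ℚ R (1/2)) * (b - (r : R) - algebraMap ℚ R (1/2)))
    else 0

/-! On `xⁿ` the Euler operator `θ = x·d/dx` acts as multiplication by `n`, so the coefficient of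
`xⁿ⁺²` in `θ(θ − 1)f = x²(a − θ/2)(b − θ/2)f` reads
`(n + 2)(n + 1)·cₙ₊₂ = (a − n/2)(b − n/2)·cₙ`, and both sides vanish at `x⁰` and `x¹`.
For `f₃` this recurrence is the ratio of consecutive terms: odd coefficients vanish, and passing
from `x²ᵏ` to `x²ᵏ⁺²` multiplies the product by `(a − k)(b − k)` and divides the factorial by
`(2k + 2)(2k + 1)`. -/

theorem coeff_X_mul_derivative {R : Type*} [CommRing R] (f : R⟦X⟧) (n : ℕ) :
    coeff n (X * d⁄dX R f) = n * coeff n f := by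
  cases n with
  | zero => simp
  | succ m =>
    rw [coeff_succ_X_mul, coeff_derivative]
    push_cast
    ring

theorem hypergeometric_eq_of_coeff_recurrence {R : Type*} [CommRing R] [Algebra ℚ R] (a b : R)
    (f : R⟦X⟧)
    (h : ∀ n : ℕ, ((n + 2) * (n + 1) : R) * coeff (n + 2) f =
      (a - (1/2 : ℚ) • (n : R)) * (b - (1/2 : ℚ) • (n : R)) * coeff n f) :
    X * d⁄dX R (X * d⁄dX R f - f) =
      (X : R⟦X⟧) ^ 2 * (C a * (C b * f - (1/2 : ℚ) • (X * d⁄dX R f)) -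
        (1/2 : ℚ) • (X * d⁄dX R (C b * f - (1/2 : ℚ) • (X * d⁄dX R f)))) := by
  ext (_ | _ | n)
  · simp
  · simp [coeff_X_mul_derivative, coeff_X_pow_mul']
  · rw [show n + 1 + 1 = n + 2 from rfl]
    simp only [coeff_X_mul_derivative, map_sub (coeff _), coeff_X_pow_mul', coeff_C_mul,
      coeff_smul, le_add_iff_nonneg_left, zero_le, if_true, Nat.add_sub_cancel]
    have hn := h n
    simp only [Algebra.smul_def] at hn ⊢
    push_cast
    linear_combination hn

theorem coeff_f₃_add_two {R : Type*} [CommRing R] [Algebra ℚ R] (a b : R) (n : ℕ) :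
    ((n + 2) * (n + 1) : R) * coeff (n + 2) (f₃ a b) =
      (a - (1/2 : ℚ) • (n : R)) * (b - (1/2 : ℚ) • (n : R)) * coeff n (f₃ a b) := by
  obtain ⟨k, rfl | rfl⟩ := Nat.even_or_odd' n
  · have half_two_mul : (1/2 : ℚ) • ((2 * k : ℕ) : R) = k := by
      rw [Nat.cast_mul, Nat.cast_ofNat, ← smul_mul_assoc, Algebra.smul_def,
        ← map_ofNat (algebraMap ℚ R) 2, ← map_mul]
      norm_num
    have factorial_ratio : ((2 * k + 2 : ℕ) : ℚ) * (2 * k + 1 : ℕ) *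
        ((2 * k + 2).factorial : ℚ)⁻¹ = ((2 * k).factorial : ℚ)⁻¹ := by
      rw [Nat.factorial_succ, Nat.factorial_succ]
      push_cast
      field_simp
      ring
    simp only [f₃, coeff_mk, half_two_mul, Nat.mul_add_mod_self_left, Nat.mul_mod_right, if_true,
      show (2 * k + 2) / 2 = k + 1 by omega, Nat.mul_div_cancel_left k two_pos,
      Finset.prod_range_succ]
    rw [← factorial_ratio]
    simp only [Algebra.smul_def, map_mul, map_natCast]
    push_cast
    ring
  · simp [f₃, Nat.add_mod]

/-- `f₃` is annihilated by the hypergeometric operator: with `θ(f) = x·f′` and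
`g = b·f₃ − (x/2)·f₃′`, one has `θ(θ(f₃) − f₃) = x²·(a·g − (x/2)·g′)`. -/
theorem stmt6 {R : Type*} [CommRing R] [Algebra ℚ R] (a b : R) :
    PowerSeries.X * d⁄dX R (PowerSeries.X * d⁄dX R (f₃ a b) - f₃ a b) =
      (PowerSeries.X : R⟦X⟧) ^ 2 *
        (C a * (C b * f₃ a b - (1/2 : ℚ) • (PowerSeries.X * d⁄dX R (f₃ a b))) -
          (1/2 : ℚ) • (PowerSeries.X *
            d⁄dX R (C b * f₃ a b - (1/2 : ℚ) • (PowerSeries.X * d⁄dX R (f₃ a b))))) :=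
  hypergeometric_eq_of_coeff_recurrence a b (f₃ a b) (coeff_f₃_add_two a b)
end

section
/- Let R be a commutative ring that is a ℚ-algebra and let a, b ∈ R. A formal power series Φ ∈ R[[y]] satisfies the formal differential equation (y²/4 − 1)·Φ″ + (1/4 + (a+b)/2)·y·Φ′ + a·b·Φ = 0 if and only if Φ = c₀·f₁ + c₁·f₂, where c₀ and c₁ are the coefficients of y⁰ and y¹ in Φ, and where f₁ = Σ_{k≥0} (∏_{r=1}^{k} (a+r−1)(b+r−1)) · y^{2k}/(2k)! and f₂ = Σ_{k≥0} (∏_{r=1}^{k} (a+r−1/2)(b+r−1/2)) · y^{2k+1}/(2k+1)!. -/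
open PowerSeries

/-!
Comparing coefficients of `yⁿ` turns the equation into the two-step recurrence
`(n+1)(n+2)·c_{n+2} = (a + n/2)(b + n/2)·c_n`. Over a `ℚ`-algebra the factor `(n+1)(n+2)` is
invertible, so a solution is determined by `c₀` and `c₁`; on the other hand the even series `f₁`
and the odd series `f₂` satisfy the recurrence and have initial coefficients `(1, 0)` and `(0, 1)`.
-/

open scoped Nat

theorem Nat.cast_add_one_mul_cast_add_two_mul_inv_factorial (n : ℕ) :
    ((n : ℚ) + 1) * ((n : ℚ) + 2) * ((n + 2)! : ℚ)⁻¹ = (n ! : ℚ)⁻¹ := by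
  rw [Nat.factorial_succ, Nat.factorial_succ]
  push_cast
  field_simp
  ring

namespace PowerSeries

section Derivative

variable {R : Type*} [CommRing R]

theorem coeff_X_mul_derivative (Φ : R⟦X⟧) (n : ℕ) :
    coeff n (X * d⁄dX R Φ) = n * coeff n Φ := by
  cases n with
  | zero => simp
  | succ n => rw [coeff_succ_X_mul, coeff_derivative, Nat.cast_succ, mul_comm]

theorem coeff_X_sq_mul_derivative_derivative (Φ : R⟦X⟧) (n : ℕ) :
    coeff n (X ^ 2 * d⁄dX R (d⁄dX R Φ)) = n * (n - 1) * coeff n Φ := by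
  rcases n with _ | _ | n
  · simp
  · simp [coeff_X_pow_mul']
  · rw [coeff_X_pow_mul', if_pos (by omega), show n + 1 + 1 - 2 = n by omega, coeff_derivative,
      coeff_derivative]
    push_cast
    ring

end Derivative

section Hypergeometric

variable {R : Type*} [CommRing R] [Algebra ℚ R] {a b : R} {Φ Ψ : R⟦X⟧}

variable (a b) in
noncomputable def hypergeomOperator (Φ : R⟦X⟧) : R⟦X⟧ :=
  ((1/4 : ℚ) • (X : R⟦X⟧) ^ 2 - 1) * d⁄dX R (d⁄dX R Φ) +
    ((1/4 : ℚ) • (1 : R⟦X⟧) + (1/2 : ℚ) • C (a + b)) * X * d⁄dX R Φ + C (a * b) * Φ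

variable (a b) in
def SatisfiesHypergeomRec (Φ : R⟦X⟧) : Prop :=
  ∀ n : ℕ, (((n : ℚ) + 1) * ((n : ℚ) + 2)) • coeff (n + 2) Φ =
    (a + algebraMap ℚ R (n / 2)) * (b + algebraMap ℚ R (n / 2)) * coeff n Φ

variable (a b) in
theorem coeff_hypergeomOperator (Φ : R⟦X⟧) (n : ℕ) :
    coeff n (hypergeomOperator a b Φ) =
      (a + algebraMap ℚ R (n / 2)) * (b + algebraMap ℚ R (n / 2)) * coeff n Φ -
        (((n : ℚ) + 1) * ((n : ℚ) + 2)) • coeff (n + 2) Φ := by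
  have hsplit : hypergeomOperator a b Φ =
      (1/4 : ℚ) • (X ^ 2 * d⁄dX R (d⁄dX R Φ)) - d⁄dX R (d⁄dX R Φ) +
        ((1/4 : ℚ) • (X * d⁄dX R Φ) + (1/2 : ℚ) • (C (a + b) * (X * d⁄dX R Φ))) +
        C (a * b) * Φ := by
    simp only [hypergeomOperator, sub_mul, add_mul, one_mul, smul_mul_assoc, mul_assoc]
  -- every rational constant is a polynomial in `½`, which `ring` then treats as an atom
  have hquarter : algebraMap ℚ R (1/4) = algebraMap ℚ R (1/2) * algebraMap ℚ R (1/2) := by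
    rw [← map_mul]; norm_num
  have hhalf : algebraMap ℚ R (n / 2) = n * algebraMap ℚ R (1/2) := by
    rw [← map_natCast (algebraMap ℚ R), ← map_mul, mul_one_div]
  rw [hsplit]
  simp only [map_add (coeff n), map_sub, coeff_smul, coeff_C_mul, coeff_X_mul_derivative,
    coeff_X_sq_mul_derivative_derivative, coeff_derivative]
  simp only [Algebra.smul_def, hquarter, hhalf, map_add, map_mul, map_natCast, map_ofNat]
  push_cast
  ring

theorem hypergeomOperator_eq_zero_iff :
    hypergeomOperator a b Φ = 0 ↔ SatisfiesHypergeomRec a b Φ := by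
  simp only [PowerSeries.ext_iff, coeff_hypergeomOperator, map_zero, sub_eq_zero]
  exact forall_congr' fun _ => eq_comm

theorem SatisfiesHypergeomRec.add (hΦ : SatisfiesHypergeomRec a b Φ)
    (hΨ : SatisfiesHypergeomRec a b Ψ) : SatisfiesHypergeomRec a b (Φ + Ψ) := fun n => by
  rw [map_add, map_add, smul_add, hΦ n, hΨ n]
  ring

theorem SatisfiesHypergeomRec.C_mul (c : R) (hΦ : SatisfiesHypergeomRec a b Φ) :
    SatisfiesHypergeomRec a b (C c * Φ) := fun n => by
  rw [coeff_C_mul, coeff_C_mul, ← mul_smul_comm, hΦ n]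
  ring

theorem SatisfiesHypergeomRec.ext (hΦ : SatisfiesHypergeomRec a b Φ)
    (hΨ : SatisfiesHypergeomRec a b Ψ) (h₀ : coeff 0 Φ = coeff 0 Ψ)
    (h₁ : coeff 1 Φ = coeff 1 Ψ) : Φ = Ψ := by
  ext n
  induction n using Nat.twoStepInduction with
  | zero => exact h₀
  | one => exact h₁
  | more n ih _ =>
    have hn : ((n : ℚ) + 1) * ((n : ℚ) + 2) ≠ 0 := by positivity
    rw [← inv_smul_smul₀ hn (coeff (n + 2) Φ), hΦ n, ih, ← hΨ n, inv_smul_smul₀ hn]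

theorem satisfiesHypergeomRec_mk_parity {i : ℕ} (hi : i < 2) (P : ℕ → R)
    (hP : ∀ m : ℕ, P (m + 1) = (a + algebraMap ℚ R ((2 * m + i : ℕ) / 2)) *
      (b + algebraMap ℚ R ((2 * m + i : ℕ) / 2)) * P m) :
    SatisfiesHypergeomRec a b (mk fun n => if n % 2 = i then (n ! : ℚ)⁻¹ • P (n / 2) else 0) := by
  intro n
  simp only [coeff_mk, Nat.add_mod_right]
  split_ifs with hn
  · rw [show (n + 2) / 2 = n / 2 + 1 by omega, hP, show 2 * (n / 2) + i = n by omega, smul_smul,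
      Nat.cast_add_one_mul_cast_add_two_mul_inv_factorial, Algebra.smul_def, Algebra.smul_def]
    ring
  · rw [smul_zero, mul_zero]

variable (a b)

theorem satisfiesHypergeomRec_f₁ : SatisfiesHypergeomRec a b (f₁ a b) := by
  refine satisfiesHypergeomRec_mk_parity (a := a) (b := b) (i := 0) (by norm_num)
    (fun m => ∏ r ∈ Finset.range m, ((a + r) * (b + r))) fun m => ?_
  rw [Finset.prod_range_succ, show ((2 * m + 0 : ℕ) : ℚ) / 2 = m by push_cast; ring,
    map_natCast]
  ring

theorem satisfiesHypergeomRec_f₂ : SatisfiesHypergeomRec a b (f₂ a b) := by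
  refine satisfiesHypergeomRec_mk_parity (a := a) (b := b) (i := 1) (by norm_num)
    (fun m => ∏ r ∈ Finset.range m,
      ((a + r + algebraMap ℚ R (1/2)) * (b + r + algebraMap ℚ R (1/2)))) fun m => ?_
  rw [Finset.prod_range_succ, show ((2 * m + 1 : ℕ) : ℚ) / 2 = m + 1 / 2 by push_cast; ring,
    map_add, map_natCast]
  ring

@[simp] theorem constantCoeff_f₁ : constantCoeff (f₁ a b) = 1 := by simp [f₁]

@[simp] theorem coeff_one_f₁ : coeff 1 (f₁ a b) = 0 := by simp [f₁]

@[simp] theorem constantCoeff_f₂ : constantCoeff (f₂ a b) = 0 := by simp [f₂]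

@[simp] theorem coeff_one_f₂ : coeff 1 (f₂ a b) = 1 := by simp [f₂]

end Hypergeometric

end PowerSeries

/-- A power series `Φ` satisfies
`(y²/4 − 1)·Φ″ + (1/4 + (a+b)/2)·y·Φ′ + a·b·Φ = 0` iff `Φ = c₀·f₁ + c₁·f₂`, where
`c₀, c₁` are the coefficients of `y⁰, y¹` of `Φ`. -/
theorem stmt10 {R : Type*} [CommRing R] [Algebra ℚ R] (a b : R) (Φ : R⟦X⟧) :
    ((1/4 : ℚ) • (PowerSeries.X : R⟦X⟧) ^ 2 - 1) * d⁄dX R (d⁄dX R Φ) +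
        ((1/4 : ℚ) • (1 : R⟦X⟧) + (1/2 : ℚ) • C (a + b)) * PowerSeries.X * d⁄dX R Φ +
        C (a * b) * Φ = 0 ↔
      Φ = C (coeff 0 Φ) * f₁ a b + C (coeff 1 Φ) * f₂ a b := by
  change hypergeomOperator a b Φ = 0 ↔ _
  have hsol : SatisfiesHypergeomRec a b (C (coeff 0 Φ) * f₁ a b + C (coeff 1 Φ) * f₂ a b) :=
    ((satisfiesHypergeomRec_f₁ a b).C_mul _).add ((satisfiesHypergeomRec_f₂ a b).C_mul _)
  rw [hypergeomOperator_eq_zero_iff]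
  constructor
  · intro hΦ
    exact hΦ.ext hsol (by simp) (by simp)
  · intro hΦ
    rw [hΦ]
    exact hsol
end
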